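/- Let Z ≠ 0 be real, α > 0, β < 0, and set ω = -β/α; assume ω > Z²/4. Define φ₊ : ℝ → ℝ by φ₊(x) = -(3β/2)·sech²((√ω/2)·x - artanh(Z/(2√ω))) and φ₋(x) = φ₊(-x). Then: (i) φ₋(0) = φ₊(0); (ii) φ₊'(0) - φ₋'(0) = Z·φ₋(0); (iii) (Z²/2)·φ₋(0) + Z·φ₋'(0) = φ₊''(0) - φ₋''(0). In particular, φ₊'(0) = (Z/2)·φ₊(0). -/

import Mathlib

/-!
Since `φ₋` is the reflection of `φ₊`, it has the same value and second derivative at `0` and the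
opposite first derivative, so all three vertex conditions reduce to `φ₊'(0) = (Z/2) φ₊(0)`.
That identity follows from `(sech² u)' = -2 tanh u · sech² u`: at `0` the argument is
`-artanh (Z/(2√ω))`, so `φ₊'(0) = 2 · (√ω/2) · Z/(2√ω) · φ₊(0)`.
-/

noncomputable def artanh (y : ℝ) : ℝ := 1/2 * Real.log ((1 + y) / (1 - y))

lemma tanh_artanh {y : ℝ} (hy : y ∈ Set.Ioo (-1) 1) : Real.tanh (artanh y) = y := by
  rw [artanh, ← Real.artanh_eq_half_log (Set.Ioo_subset_Icc_self hy), Real.tanh_artanh hy]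

lemma div_two_sqrt_mem_Ioo {Z ω : ℝ} (h : Z ^ 2 / 4 < ω) : Z / (2 * √ω) ∈ Set.Ioo (-1) 1 := by
  have hω : 0 < ω := lt_of_le_of_lt (by positivity) h
  have hsq : Z ^ 2 < (2 * √ω) ^ 2 := by
    rw [mul_pow, Real.sq_sqrt hω.le]
    linarith
  have hpos : 0 < 2 * √ω := by have := Real.sqrt_pos.2 hω; positivity
  rw [Set.mem_Ioo, ← abs_lt, abs_div, abs_of_pos hpos, div_lt_one hpos]
  exact abs_lt_of_sq_lt_sq hsq hpos.le

lemma hasDerivAt_inv_cosh_sq (x : ℝ) :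
    HasDerivAt (fun x => (1 / Real.cosh x) ^ 2) (-2 * Real.tanh x * (1 / Real.cosh x) ^ 2) x := by
  have hcosh : Real.cosh x ≠ 0 := (Real.cosh_pos x).ne'
  simp only [one_div]
  refine (((Real.hasDerivAt_cosh x).inv hcosh).pow 2).congr_deriv ?_
  rw [Pi.inv_apply, Real.tanh_eq_sinh_div_cosh]
  push_cast
  ring

lemma deriv_const_mul_inv_cosh_sq_affine (c k a x : ℝ) :
    deriv (fun x => c * (1 / Real.cosh (k * x - a)) ^ 2) x
      = -2 * k * Real.tanh (k * x - a) * (c * (1 / Real.cosh (k * x - a)) ^ 2) := by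
  have hlin : HasDerivAt (fun x => k * x - a) k x := by
    simpa using ((hasDerivAt_id x).const_mul k).sub_const a
  have h := ((hasDerivAt_inv_cosh_sq (k * x - a)).comp x hlin).const_mul c
  exact h.deriv.trans (by ring)

lemma vertex_conditions_comp_neg_of_deriv_eq (f : ℝ → ℝ) (Z : ℝ)
    (hf : deriv f 0 = Z / 2 * f 0) :
    let g : ℝ → ℝ := fun x => f (-x)
    g 0 = f 0 ∧ deriv f 0 - deriv g 0 = Z * g 0 ∧
      Z ^ 2 / 2 * g 0 + Z * deriv g 0 = iteratedDeriv 2 f 0 - iteratedDeriv 2 g 0 := by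
  intro g
  have hg0 : g 0 = f 0 := by simp [g]
  have hg' : deriv g 0 = -deriv f 0 := by simp [g, deriv_comp_neg]
  have hg'' : iteratedDeriv 2 g 0 = iteratedDeriv 2 f 0 := by simp [g, iteratedDeriv_comp_neg]
  refine ⟨hg0, ?_, ?_⟩
  · rw [hg', hg0, hf]; ring
  · rw [hg', hg0, hg'', hf]; ring

theorem bump_profile_vertex_conditions_general (Z α β : ℝ)
    (hω : Z^2 / 4 < -β / α) :
    let ω : ℝ := -β / α
    let φp : ℝ → ℝ := fun x =>
      -(3 * β / 2) * (1 / Real.cosh (Real.sqrt ω / 2 * x - artanh (Z / (2 * Real.sqrt ω))))^2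
    let φm : ℝ → ℝ := fun x => φp (-x)
    φm 0 = φp 0 ∧
    deriv φp 0 - deriv φm 0 = Z * φm 0 ∧
    Z^2 / 2 * φm 0 + Z * deriv φm 0 = iteratedDeriv 2 φp 0 - iteratedDeriv 2 φm 0 ∧
    deriv φp 0 = Z / 2 * φp 0 := by
  intro ω φp φm
  replace hω : Z ^ 2 / 4 < ω := hω
  clear_value ω
  have hω0 : 0 < ω := lt_of_le_of_lt (by positivity) hω
  have hφp' : deriv φp 0 = Z / 2 * φp 0 := by
    simp only [φp]
    rw [deriv_const_mul_inv_cosh_sq_affine, mul_zero, zero_sub, Real.tanh_neg,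
      tanh_artanh (div_two_sqrt_mem_Ioo hω)]
    field_simp [(Real.sqrt_pos.2 hω0).ne']
  obtain ⟨h0, h1, h2⟩ := vertex_conditions_comp_neg_of_deriv_eq φp Z hφp'
  exact ⟨h0, h1, h2, hφp'⟩

/-- The half-soliton profiles `φ₊, φ₋` satisfy the δ-type vertex conditions
defining `D(A_Z)`, i.e. the bump/tail stationary profiles `U_Z` belong to the
domain of the Airy operator on a balanced star graph. -/
theorem bump_profile_vertex_conditions (Z α β : ℝ) (hZ : Z ≠ 0) (hα : 0 < α)
    (hβ : β < 0) (hω : Z^2 / 4 < -β / α) :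
    let ω : ℝ := -β / α
    let φp : ℝ → ℝ := fun x =>
      -(3 * β / 2) * (1 / Real.cosh (Real.sqrt ω / 2 * x - artanh (Z / (2 * Real.sqrt ω))))^2
    let φm : ℝ → ℝ := fun x => φp (-x)
    φm 0 = φp 0 ∧
    deriv φp 0 - deriv φm 0 = Z * φm 0 ∧
    Z^2 / 2 * φm 0 + Z * deriv φm 0 = iteratedDeriv 2 φp 0 - iteratedDeriv 2 φm 0 ∧
    deriv φp 0 = Z / 2 * φp 0 :=
  bump_profile_vertex_conditions_general Z α β hω
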